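/- arXiv:2105.10119 — 5 statements merged into one kernel-verified Lean document; each statement's English description precedes it below -/
import Mathlib

section
/- Let V be a real inner product space and W a real inner product space, and let B : V × V → W be a symmetric bilinear map. Suppose there is a constant λ ≥ 0 such that ‖B(x,x)‖ = λ‖x‖² for all x ∈ V. Then for every orthogonal pair x, y ∈ V, ⟨B(x,x), B(x,y)⟩ = 0. -/
open RealInnerProductSpace

/-- Lemma 3.1, 'only if' direction (isotropy criterion for a symmetric bilinear map,
abstracting the second fundamental form of a Riemannian map): if `‖B(x,x)‖ = λ‖x‖²`
for all `x`, then `⟨B(x,x), B(x,y)⟩ = 0` for every orthogonal pair `x, y`. -/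
theorem isotropic_implies_orthogonality
    {V : Type*} [NormedAddCommGroup V] [InnerProductSpace ℝ V]
    {W : Type*} [NormedAddCommGroup W] [InnerProductSpace ℝ W]
    (B : V →ₗ[ℝ] V →ₗ[ℝ] W) (hsymm : ∀ x y : V, B x y = B y x)
    (lam : ℝ) (hlam : 0 ≤ lam)
    (hiso : ∀ x : V, ‖B x x‖ = lam * ‖x‖ ^ 2) :
    ∀ x y : V, ⟪x, y⟫ = 0 → ⟪B x x, B x y⟫ = 0 := by
  intro x y hxy
  set u := B x x with hu
  set v := B x y with hv
  set w := B y y with hw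
  have hnorm2 : ∀ t : ℝ, ‖x + t • y‖ ^ 2 = ‖x‖ ^ 2 + t ^ 2 * ‖y‖ ^ 2 := by
    intro t
    have h1 : ⟪x, t • y⟫ = 0 := by
      rw [real_inner_smul_right, hxy]; ring
    rw [norm_add_sq_real, h1, norm_smul]
    simp [mul_pow, sq_abs]
  have key : ∀ t : ℝ,
      ⟪u, u⟫ + 4 * t * ⟪u, v⟫ + t ^ 2 * (4 * ⟪v, v⟫ + 2 * ⟪u, w⟫)
        + 4 * t ^ 3 * ⟪v, w⟫ + t ^ 4 * ⟪w, w⟫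
        = lam ^ 2 * (‖x‖ ^ 2 + t ^ 2 * ‖y‖ ^ 2) ^ 2 := by
    intro t
    have hexp : B (x + t • y) (x + t • y) = u + (2 * t) • v + (t ^ 2) • w := by
      simp only [map_add, map_smul, LinearMap.add_apply, LinearMap.smul_apply]
      rw [hsymm y x]
      rw [hu, hv, hw]
      module
    have hrhs : ⟪B (x + t • y) (x + t • y), B (x + t • y) (x + t • y)⟫
        = lam ^ 2 * (‖x‖ ^ 2 + t ^ 2 * ‖y‖ ^ 2) ^ 2 := by
      rw [real_inner_self_eq_norm_sq, hiso, hnorm2]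
      ring
    rw [hexp] at hrhs
    simp only [inner_add_left, inner_add_right, real_inner_smul_left,
      real_inner_smul_right] at hrhs
    have hsvu : ⟪u, v⟫ = ⟪v, u⟫ := (real_inner_comm u v).symm
    have hswu : ⟪u, w⟫ = ⟪w, u⟫ := (real_inner_comm u w).symm
    have hswv : ⟪v, w⟫ = ⟪w, v⟫ := (real_inner_comm v w).symm
    rw [← hsvu, ← hswu, ← hswv] at hrhs
    linear_combination hrhs
  have e1 := key 1
  have e2 := key (-1)
  have e3 := key 2
  have e4 := key (-2)
  norm_num at e1 e2 e3 e4
  linarith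
end

section
/- Let V and W be real inner product spaces and B : V × V → W a symmetric bilinear map. If ⟨B(x,x), B(x,y)⟩ = 0 for every orthogonal pair x, y ∈ V, then the function x ↦ ‖B(x,x)‖ / ‖x‖² is constant on nonzero vectors; i.e., there exists λ ≥ 0 such that ‖B(x,x)‖ = λ‖x‖² for all x ∈ V (assuming V has dimension ≥ 2 and is connected in the sense of the unit sphere, e.g. dim V ≥ 2). -/
open RealInnerProductSpace

/-!
For `x ⊥ y` the vectors `x + t • y` and `(‖y‖² t) • x - ‖x‖² • y` are orthogonal for every `t`,
so the hypothesis applied to them is a polynomial identity in `t`. Its values at `t = 1, 2` give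
`‖x‖² (⟪Bxx, Byy⟫ + 2‖Bxy‖²) = ‖y‖² ‖Bxx‖²` and `‖x‖⁴ ‖Byy‖² = ‖y‖⁴ ‖Bxx‖²`. Expanding `B z z`
for `z = c • x + y` with these relations yields `‖x‖² ‖Bzz‖ = ‖z‖² ‖Bxx‖` for all `x, z`.
-/

section

variable {V W : Type*} [NormedAddCommGroup V] [InnerProductSpace ℝ V]
  [NormedAddCommGroup W] [InnerProductSpace ℝ W] {B : V →ₗ[ℝ] V →ₗ[ℝ] W}

theorem inner_apply_apply_self_eq_zero (hsymm : ∀ x y : V, B x y = B y x)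
    (horth : ∀ x y : V, ⟪x, y⟫ = 0 → ⟪B x x, B x y⟫ = 0) {x y : V} (hxy : ⟪x, y⟫ = 0) :
    ⟪B x y, B y y⟫ = 0 := by
  rw [real_inner_comm, ← hsymm y x]
  exact horth y x (by rwa [real_inner_comm])

theorem orthogonal_pair_norm_relations (hsymm : ∀ x y : V, B x y = B y x)
    (horth : ∀ x y : V, ⟪x, y⟫ = 0 → ⟪B x x, B x y⟫ = 0) {x y : V} (hxy : ⟪x, y⟫ = 0) :
    ‖x‖ ^ 2 * (⟪B x x, B y y⟫ + 2 * ‖B x y‖ ^ 2) = ‖y‖ ^ 2 * ‖B x x‖ ^ 2 ∧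
      ‖x‖ ^ 4 * ‖B y y‖ ^ 2 = ‖y‖ ^ 4 * ‖B x x‖ ^ 2 := by
  have pencil (t : ℝ) : t * (‖y‖ ^ 2 * ‖B x x‖ ^ 2
      + (‖y‖ ^ 2 * t ^ 2 - ‖x‖ ^ 2) * (⟪B x x, B y y⟫ + 2 * ‖B x y‖ ^ 2)
      - ‖x‖ ^ 2 * t ^ 2 * ‖B y y‖ ^ 2) = 0 := by
    have hperp : ⟪x + t • y, (‖y‖ ^ 2 * t) • x - ‖x‖ ^ 2 • y⟫ = 0 := by
      simp only [inner_add_left, inner_sub_right, real_inner_smul_left, real_inner_smul_right,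
        hxy, real_inner_comm x y, real_inner_self_eq_norm_sq]
      ring
    have h := horth _ _ hperp
    simp only [map_add, map_sub, map_smul, LinearMap.add_apply, LinearMap.smul_apply, hsymm y x,
      inner_add_left, inner_add_right, inner_sub_right, real_inner_smul_left,
      real_inner_smul_right, real_inner_comm (B x x) (B x y), real_inner_comm (B x y) (B y y),
      real_inner_comm (B x x) (B y y), horth x y hxy,
      inner_apply_apply_self_eq_zero hsymm horth hxy] at h
    simp only [real_inner_self_eq_norm_sq] at h
    linear_combination h
  have h1 := pencil 1
  have h2 := pencil 2
  have hK : ‖x‖ ^ 2 * (⟪B x x, B y y⟫ + 2 * ‖B x y‖ ^ 2) = ‖y‖ ^ 2 * ‖B x x‖ ^ 2 := by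
    linear_combination (h2 - 8 * h1) / 6
  exact ⟨hK, by linear_combination ‖x‖ ^ 2 * (-h1) + (‖y‖ ^ 2 - ‖x‖ ^ 2) * hK⟩

theorem norm_sq_apply_smul_add_of_inner_eq_zero (hsymm : ∀ x y : V, B x y = B y x)
    (horth : ∀ x y : V, ⟪x, y⟫ = 0 → ⟪B x x, B x y⟫ = 0) {x y : V} (hxy : ⟪x, y⟫ = 0) (c : ℝ) :
    ‖x‖ ^ 4 * ‖B (c • x + y) (c • x + y)‖ ^ 2 = (c ^ 2 * ‖x‖ ^ 2 + ‖y‖ ^ 2) ^ 2 * ‖B x x‖ ^ 2 := by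
  obtain ⟨hK, hd⟩ := orthogonal_pair_norm_relations hsymm horth hxy
  rw [← real_inner_self_eq_norm_sq (B _ _)]
  simp only [map_add, map_smul, LinearMap.add_apply, LinearMap.smul_apply, hsymm y x,
    inner_add_left, inner_add_right, real_inner_smul_left, real_inner_smul_right,
    real_inner_comm (B x x) (B x y), real_inner_comm (B x y) (B y y),
    real_inner_comm (B x x) (B y y), horth x y hxy, inner_apply_apply_self_eq_zero hsymm horth hxy]
  simp only [real_inner_self_eq_norm_sq]
  linear_combination (2 * c ^ 2 * ‖x‖ ^ 2) * hK + hd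

theorem norm_sq_mul_norm_apply_self_comm (hsymm : ∀ x y : V, B x y = B y x)
    (horth : ∀ x y : V, ⟪x, y⟫ = 0 → ⟪B x x, B x y⟫ = 0) (x z : V) :
    ‖x‖ ^ 2 * ‖B z z‖ = ‖z‖ ^ 2 * ‖B x x‖ := by
  rcases eq_or_ne x 0 with rfl | hx
  · simp
  set c := ⟪x, z⟫ / ‖x‖ ^ 2
  have hx2 : ‖x‖ ^ 2 ≠ 0 := by positivity
  have hxy : ⟪x, z - c • x⟫ = 0 := by
    rw [inner_sub_right, real_inner_smul_right, real_inner_self_eq_norm_sq,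
      div_mul_cancel₀ _ hx2, sub_self]
  have hz : z = c • x + (z - c • x) := by abel
  have hnorm : ‖z‖ ^ 2 = c ^ 2 * ‖x‖ ^ 2 + ‖z - c • x‖ ^ 2 := by
    have h := norm_add_sq_eq_norm_sq_add_norm_sq_real (x := c • x) (y := z - c • x)
      (by rw [real_inner_smul_left, hxy, mul_zero])
    rw [← hz, norm_smul, Real.norm_eq_abs] at h
    linear_combination h + ‖x‖ ^ 2 * sq_abs c
  have h := norm_sq_apply_smul_add_of_inner_eq_zero hsymm horth hxy c
  rw [← hz, ← hnorm] at h
  rw [← sq_eq_sq₀ (by positivity) (by positivity)]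
  linear_combination h

end

theorem orthogonality_implies_isotropic_general
    {V : Type*} [NormedAddCommGroup V] [InnerProductSpace ℝ V]
    {W : Type*} [NormedAddCommGroup W] [InnerProductSpace ℝ W]
    (B : V →ₗ[ℝ] V →ₗ[ℝ] W) (hsymm : ∀ x y : V, B x y = B y x)
    (horth : ∀ x y : V, ⟪x, y⟫ = 0 → ⟪B x x, B x y⟫ = 0) :
    ∃ lam : ℝ, 0 ≤ lam ∧ ∀ x : V, ‖B x x‖ = lam * ‖x‖ ^ 2 := by
  rcases subsingleton_or_nontrivial V with hV | hV
  · exact ⟨0, le_rfl, fun x => by simp [Subsingleton.elim x 0]⟩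
  obtain ⟨e, he⟩ := exists_norm_eq V zero_le_one
  refine ⟨‖B e e‖, norm_nonneg _, fun x => ?_⟩
  simpa [he, mul_comm] using norm_sq_mul_norm_apply_self_comm hsymm horth e x

/-- Lemma 3.1, converse direction (isotropy criterion): if `⟨B(x,x), B(x,y)⟩ = 0` for
every orthogonal pair `x, y` in a space of dimension ≥ 2, then `x ↦ ‖B(x,x)‖/‖x‖²` is
constant, i.e. there is `λ ≥ 0` with `‖B(x,x)‖ = λ‖x‖²` for all `x`. -/
theorem orthogonality_implies_isotropic
    {V : Type*} [NormedAddCommGroup V] [InnerProductSpace ℝ V] [FiniteDimensional ℝ V]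
    {W : Type*} [NormedAddCommGroup W] [InnerProductSpace ℝ W]
    (hdim : 2 ≤ Module.finrank ℝ V)
    (B : V →ₗ[ℝ] V →ₗ[ℝ] W) (hsymm : ∀ x y : V, B x y = B y x)
    (horth : ∀ x y : V, ⟪x, y⟫ = 0 → ⟪B x x, B x y⟫ = 0) :
    ∃ lam : ℝ, 0 ≤ lam ∧ ∀ x : V, ‖B x x‖ = lam * ‖x‖ ^ 2 :=
  orthogonality_implies_isotropic_general B hsymm horth
end

section
/- Let V, W be real inner product spaces, B : V × V → W symmetric bilinear, λ a real constant, and f(x₁,x₂,u₁,u₂) = ⟨B(x₁,x₂), B(u₁,u₂)⟩ − λ²⟨x₁,x₂⟩⟨u₁,u₂⟩. If f(u,u,u,u) = 0 for all u ∈ V, then f(x,y,y,y) = 0 for all x, y ∈ V; in particular ⟨B(x,y), B(y,y)⟩ = λ²⟨x,y⟩‖y‖² for all x, y. -/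
open RealInnerProductSpace

theorem quarticF_key {V : Type*} [NormedAddCommGroup V] [InnerProductSpace ℝ V]
    {W : Type*} [NormedAddCommGroup W] [InnerProductSpace ℝ W]
    (B : V →ₗ[ℝ] V →ₗ[ℝ] W) (hsymm : ∀ x y : V, B x y = B y x) (lam : ℝ)
    (hdiag : ∀ u : V, ⟪B u u, B u u⟫ - lam ^ 2 * (⟪u, u⟫ * ⟪u, u⟫) = 0) (x y : V) :
    ⟪B x y, B y y⟫ - lam ^ 2 * (⟪x, y⟫ * ⟪y, y⟫) = 0 := by
  have h1 := hdiag (y + x)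
  have h2 := hdiag (y - x)
  have h3 := hdiag (y + (2:ℝ) • x)
  have h4 := hdiag x
  have h5 := hdiag y
  simp only [map_add, map_sub, map_smul, LinearMap.add_apply, LinearMap.sub_apply,
    LinearMap.smul_apply, inner_add_left, inner_add_right, inner_sub_left, inner_sub_right,
    inner_smul_left, inner_smul_right, hsymm x y, real_inner_comm (B y y) (B y x),
    real_inner_comm (B x x) (B y x), real_inner_comm (B x x) (B y y),
    real_inner_comm x y, conj_trivial] at *
  nlinarith [h1, h2, h3, h4, h5]

/-- The quadrilinear function `f(x₁,x₂,u₁,u₂) = ⟨B(x₁,x₂),B(u₁,u₂)⟩ − λ²⟨x₁,x₂⟩⟨u₁,u₂⟩`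
from the proof of Lemma 3.1. -/
noncomputable def quarticF {V : Type*} [NormedAddCommGroup V] [InnerProductSpace ℝ V]
    {W : Type*} [NormedAddCommGroup W] [InnerProductSpace ℝ W]
    (B : V →ₗ[ℝ] V →ₗ[ℝ] W) (lam : ℝ) (x₁ x₂ u₁ u₂ : V) : ℝ :=
  ⟪B x₁ x₂, B u₁ u₂⟫ - lam ^ 2 * (⟪x₁, x₂⟫ * ⟪u₁, u₂⟫)

/-- Full polarization conclusion in Lemma 3.1: if `f(u,u,u,u) = 0` for all `u`, then
`f(x,y,y,y) = 0` for all `x, y`; in particular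
`⟨B(x,y), B(y,y)⟩ = λ²⟨x,y⟩‖y‖²` for all `x, y`. -/
theorem quarticF_full_polarization
    {V : Type*} [NormedAddCommGroup V] [InnerProductSpace ℝ V]
    {W : Type*} [NormedAddCommGroup W] [InnerProductSpace ℝ W]
    (B : V →ₗ[ℝ] V →ₗ[ℝ] W) (hsymm : ∀ x y : V, B x y = B y x) (lam : ℝ)
    (hdiag : ∀ u : V, quarticF B lam u u u u = 0) :
    (∀ x y : V, quarticF B lam x y y y = 0) ∧
      ∀ x y : V, ⟪B x y, B y y⟫ = lam ^ 2 * (⟪x, y⟫ * ‖y‖ ^ 2) := by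
  have key : ∀ x y : V, quarticF B lam x y y y = 0 := fun x y =>
    quarticF_key B hsymm lam (fun u => hdiag u) x y
  refine ⟨key, fun x y => ?_⟩
  have h := key x y
  simp only [quarticF, sub_eq_zero] at h
  rw [h, real_inner_self_eq_norm_sq]
end

section
/- Let φ : M → N be a Riemannian submersion (so its second fundamental form (∇φ∗)(X,Y) vanishes on horizontal vector fields X, Y) and ψ : N → P a λ-isotropic isometric immersion (meaning ‖(∇ψ∗)(U,U)‖ = λ‖U‖² for all tangent vectors U on N). Then the composition T = ψ ∘ φ is a λ-h-isotropic Riemannian map: for every horizontal vector X on M, ‖(∇T∗)(X,X)‖ = λ‖T∗X‖². -/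
open RealInnerProductSpace

/-- Proposition 3.1: composition of a Riemannian submersion `φ` and a `λ`-isotropic
isometric immersion `ψ` is a `λ`-h-isotropic Riemannian map.  Formalized pointwise:
`V` is the horizontal space of `φ` at a point, `V'` (resp. `V''`) the tangent space of
the intermediate (resp. target) manifold, `φ*, ψ*` the differentials (linear isometries
on these spaces), `Bφ, Bψ, BT` the second fundamental forms of `φ`, `ψ` and `T = ψ∘φ`.
Hypotheses: `φ` is a Riemannian submersion so `Bφ = 0` on horizontal vectors; `ψ` is
`λ`-isotropic: `‖Bψ(U,U)‖ = λ‖U‖²`; and the composition formula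
`BT(X,Y) = ψ*(Bφ(X,Y)) + Bψ(φ*X, φ*Y)`.  Conclusion: `‖BT(X,X)‖ = λ‖T*X‖²` for every
horizontal `X`, where `T*X = ψ*(φ*X)`. -/
theorem comp_submersion_isotropic_immersion_isotropic
    {V V' V'' : Type*}
    [NormedAddCommGroup V] [InnerProductSpace ℝ V]
    [NormedAddCommGroup V'] [InnerProductSpace ℝ V']
    [NormedAddCommGroup V''] [InnerProductSpace ℝ V'']
    (φs : V →ₗ[ℝ] V') (ψs : V' →ₗ[ℝ] V'')
    (hφ : ∀ x y : V, ⟪φs x, φs y⟫ = ⟪x, y⟫)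
    (hψ : ∀ u v : V', ⟪ψs u, ψs v⟫ = ⟪u, v⟫)
    (Bφ : V →ₗ[ℝ] V →ₗ[ℝ] V') (Bψ : V' →ₗ[ℝ] V' →ₗ[ℝ] V'')
    (BT : V →ₗ[ℝ] V →ₗ[ℝ] V'')
    (lam : ℝ)
    (hsub : ∀ x y : V, Bφ x y = 0)
    (hiso : ∀ u : V', ‖Bψ u u‖ = lam * ‖u‖ ^ 2)
    (hcomp : ∀ x y : V, BT x y = ψs (Bφ x y) + Bψ (φs x) (φs y)) :
    ∀ x : V, ‖BT x x‖ = lam * ‖ψs (φs x)‖ ^ 2 := by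
  intro x
  have hnorm : ‖ψs (φs x)‖ = ‖φs x‖ := by
    have := hψ (φs x) (φs x); rw [real_inner_self_eq_norm_sq, real_inner_self_eq_norm_sq] at this; nlinarith [norm_nonneg (ψs (φs x)), norm_nonneg (φs x)]
  rw [hcomp, hsub, map_zero, zero_add, hiso, hnorm]
end

section
/- Let T : M → N be a λ-h-isotropic Riemannian map and α a horizontal circle in M with constant curvature κ (i.e., ∇_{α̇}α̇ = κY, ∇_{α̇}Y = −κα̇ for a unit field Y). Then the image curve T ∘ α in N has constant curvature κ̃ = √(κ² + λ²). -/
open RealInnerProductSpace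

/-- Direction (i)⇒(ii) of Theorem 3.1: a `λ`-h-isotropic Riemannian map carries a
horizontal circle of curvature `κ` to a curve of constant curvature `√(κ² + λ²)`.
Formalized along the curve in the (trivialized) pullback bundle `W`:
* `Tξ t = T∗(α̇(t))` is the image of the unit tangent (`‖Tξ t‖ = 1` since `T` is a
  Riemannian map and `α` is a horizontal unit-speed circle),
* `A t = T∗(∇_{α̇}α̇)(t)` with `‖A t‖ = κ` (circle equations `∇_{α̇}α̇ = κY`, `Y` unit),
* `S t = (∇T∗)(α̇,α̇)(t)`, orthogonal to `A t`, with `‖S t‖ = λ‖Tξ t‖²`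
  (`λ`-h-isotropy),
* Gauss formula `Dγ = A + S` and `κ̃ t = ‖Dγ t‖`. -/
theorem isotropic_maps_circle_to_constant_curvature
    {W : Type*} [NormedAddCommGroup W] [InnerProductSpace ℝ W]
    (κ lam : ℝ) (hκ : 0 < κ) (hlam : 0 ≤ lam)
    (Tξ A S Dγ : ℝ → W) (κt : ℝ → ℝ)
    (hUnit : ∀ t, ‖Tξ t‖ = 1)
    (hA : ∀ t, ‖A t‖ = κ)
    (hiso : ∀ t, ‖S t‖ = lam * ‖Tξ t‖ ^ 2)
    (hOrth : ∀ t, ⟪A t, S t⟫ = 0)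
    (hGauss : ∀ t, Dγ t = A t + S t)
    (hκt : ∀ t, κt t = ‖Dγ t‖) :
    ∀ t, κt t = Real.sqrt (κ ^ 2 + lam ^ 2) := by
  intro t
  have hsq : ‖Dγ t‖ ^ 2 = κ ^ 2 + lam ^ 2 := by
    rw [hGauss t, norm_add_sq_real, hOrth t, hA t, hiso t, hUnit t]
    ring
  rw [hκt t, ← hsq, Real.sqrt_sq (norm_nonneg _)]
end
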